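/- arXiv:math/0203024 — 7 statements merged into one kernel-verified Lean document; each statement's English description precedes it below -/
import Mathlib

section
/- For every x in [0,1) and every β > 1, each β-expansion of x (i.e., each sequence (ε_n) with digits in {0,1,...,⌊β⌋} satisfying x = Σ ε_n β^{-n}) lies between the lazy and the greedy β-expansions of x in the lexicographic ordering of sequences. -/
/-- Strict lexicographic order on digit sequences. -/
def LexLt (x y : ℕ → ℕ) : Prop := ∃ n, (∀ k < n, x k = y k) ∧ x n < y n

/-- Non-strict lexicographic order on digit sequences. -/
def LexLe (x y : ℕ → ℕ) : Prop := LexLt x y ∨ x = y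

/-- Remainders of the greedy algorithm in base `β`:
at each step the largest admissible digit `min ⌊β⌋ ⌊β r⌋` is subtracted. -/
noncomputable def greedyRem (β x : ℝ) : ℕ → ℝ
  | 0 => x
  | n + 1 => β * greedyRem β x n - (min ⌊β⌋₊ ⌊β * greedyRem β x n⌋₊ : ℕ)

/-- The greedy digit sequence of `x` in base `β` (digit `ε_{n+1}`). -/
noncomputable def greedySeq (β x : ℝ) (n : ℕ) : ℕ :=
  min ⌊β⌋₊ ⌊β * greedyRem β x n⌋₊

/-- The lazy digit: the smallest digit `ε` such that the remainder `βr - ε` can still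
be represented by subsequent digits, i.e. `βr - ε ≤ ⌊β⌋/(β-1)`. -/
noncomputable def lazyDigit (β r : ℝ) : ℕ :=
  min ⌊β⌋₊ (Int.toNat ⌈β * r - (⌊β⌋₊ : ℝ) / (β - 1)⌉)

/-- Remainders of the lazy algorithm in base `β`. -/
noncomputable def lazyRem (β x : ℝ) : ℕ → ℝ
  | 0 => x
  | n + 1 => β * lazyRem β x n - (lazyDigit β (lazyRem β x n) : ℕ)

/-- The lazy digit sequence of `x` in base `β`. -/
noncomputable def lazySeq (β x : ℝ) (n : ℕ) : ℕ :=
  lazyDigit β (lazyRem β x n)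

lemma lexle_of_prefix (f g : ℕ → ℕ)
    (h : ∀ n, (∀ k < n, f k = g k) → f n ≤ g n) : LexLe f g := by
  by_cases hfg : f = g
  · exact Or.inr hfg
  · left
    have hex : ∃ n, f n ≠ g n := by
      by_contra hc
      push_neg at hc
      exact hfg (funext hc)
    classical
    have hpre : ∀ k < Nat.find hex, f k = g k := fun k hk =>
      not_not.mp (Nat.find_min hex hk)
    exact ⟨Nat.find hex, hpre, lt_of_le_of_ne (h _ hpre) (Nat.find_spec hex)⟩

/-- Tail sums of an expansion. -/
noncomputable def tailSum (β : ℝ) (ε : ℕ → ℕ) (n : ℕ) : ℝ :=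
  ∑' k : ℕ, (ε (n + k) : ℝ) / β ^ (k + 1)

/-- for every `β > 1` and `x ∈ [0,1)`, each `β`-expansion of `x` with digits in
`{0,…,⌊β⌋}` lies lexicographically between the lazy and the greedy expansions of `x`. -/
theorem every_expansion_between_lazy_and_greedy
    (β : ℝ) (hβ : 1 < β) (x : ℝ) (hx : x ∈ Set.Ico (0 : ℝ) 1)
    (ε : ℕ → ℕ) (hdig : ∀ n, ε n ≤ ⌊β⌋₊)
    (hrep : x = ∑' n : ℕ, (ε n : ℝ) / β ^ (n + 1)) :
    LexLe (lazySeq β x) ε ∧ LexLe ε (greedySeq β x) := by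
  have hβ0 : (0:ℝ) < β := lt_trans one_pos hβ
  have hβ1 : (0:ℝ) < β - 1 := by linarith
  have hrlt : 1/β < 1 := by rw [div_lt_one hβ0]; exact hβ
  have hr0 : (0:ℝ) ≤ 1/β := by positivity
  have hgeo : Summable (fun k : ℕ => (1/β)^k) := summable_geometric_of_lt_one hr0 hrlt
  have hfun : (fun k : ℕ => ((⌊β⌋₊:ℝ)/β) * (1/β)^k) = fun k : ℕ => (⌊β⌋₊:ℝ)/β^(k+1) := by
    funext k
    rw [one_div, inv_pow, ← div_eq_mul_inv, div_div, ← pow_succ']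
  have hmaxsum : Summable (fun k : ℕ => (⌊β⌋₊:ℝ)/β^(k+1)) := by
    rw [← hfun]; exact hgeo.mul_left _
  have htsum_max : ∑' k : ℕ, (⌊β⌋₊:ℝ)/β^(k+1) = (⌊β⌋₊:ℝ)/(β-1) := by
    rw [← hfun, tsum_mul_left, tsum_geometric_of_lt_one hr0 hrlt]
    rw [one_div]
    field_simp
  have hsum : ∀ n, Summable (fun k : ℕ => (ε (n+k):ℝ)/β^(k+1)) := by
    intro n
    refine Summable.of_nonneg_of_le (fun k => by positivity) (fun k => ?_) hmaxsum
    gcongr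
    exact_mod_cast hdig _
  have hT0 : tailSum β ε 0 = x := by
    rw [hrep]; unfold tailSum; simp
  have hTnn : ∀ n, 0 ≤ tailSum β ε n :=
    fun n => tsum_nonneg (fun k => by positivity)
  have hTleM : ∀ n, tailSum β ε n ≤ (⌊β⌋₊:ℝ)/(β-1) := by
    intro n
    calc tailSum β ε n ≤ ∑' k : ℕ, (⌊β⌋₊:ℝ)/β^(k+1) := by
          refine Summable.tsum_le_tsum (fun k => ?_) (hsum n) hmaxsum
          gcongr
          exact_mod_cast hdig _
      _ = (⌊β⌋₊:ℝ)/(β-1) := htsum_max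
  have hTrec : ∀ n, tailSum β ε (n+1) = β * tailSum β ε n - ε n := by
    intro n
    have key : tailSum β ε n = (ε n : ℝ)/β + tailSum β ε (n+1) / β := by
      unfold tailSum
      rw [Summable.tsum_eq_zero_add (hsum n)]
      congr 1
      · simp
      · have heq : ∀ k : ℕ, (ε (n + (k+1)) : ℝ)/β^((k+1)+1)
            = (ε ((n+1)+k):ℝ)/β^(k+1)/β := by
          intro k
          have hidx : n + (k+1) = (n+1)+k := by ring
          rw [hidx, pow_succ, ← div_div]
        rw [tsum_congr heq, tsum_div_const]
    have hβne : β ≠ 0 := hβ0.ne'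
    field_simp at key
    linarith
  -- greedy side
  have hgreedy : ∀ n, (∀ k < n, ε k = greedySeq β x k) → tailSum β ε n = greedyRem β x n := by
    intro n
    induction n with
    | zero => intro _; simpa [greedyRem] using hT0
    | succ n ih =>
      intro hpre
      have h1 : tailSum β ε n = greedyRem β x n :=
        ih (fun k hk => hpre k (hk.trans (Nat.lt_succ_self n)))
      have h2 : ε n = greedySeq β x n := hpre n (Nat.lt_succ_self n)
      rw [hTrec n, h1, h2]
      simp [greedyRem, greedySeq]
  have hle_greedy : ∀ n, (∀ k < n, ε k = greedySeq β x k) → ε n ≤ greedySeq β x n := by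
    intro n hpre
    have hr := hgreedy n hpre
    have h0 : (0:ℝ) ≤ tailSum β ε (n+1) := hTnn (n+1)
    rw [hTrec n] at h0
    have hle : (ε n : ℝ) ≤ β * tailSum β ε n := by linarith
    unfold greedySeq
    refine le_min (hdig n) (Nat.le_floor ?_)
    rw [← hr]
    exact hle
  -- lazy side
  have hlazy : ∀ n, (∀ k < n, ε k = lazySeq β x k) → tailSum β ε n = lazyRem β x n := by
    intro n
    induction n with
    | zero => intro _; simpa [lazyRem] using hT0
    | succ n ih =>
      intro hpre
      have h1 : tailSum β ε n = lazyRem β x n :=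
        ih (fun k hk => hpre k (hk.trans (Nat.lt_succ_self n)))
      have h2 : ε n = lazySeq β x n := hpre n (Nat.lt_succ_self n)
      rw [hTrec n, h1, h2]
      simp [lazyRem, lazySeq]
  have hle_lazy : ∀ n, (∀ k < n, lazySeq β x k = ε k) → lazySeq β x n ≤ ε n := by
    intro n hpre
    have hr := hlazy n (fun k hk => (hpre k hk).symm)
    have h1 : tailSum β ε (n+1) ≤ (⌊β⌋₊:ℝ)/(β-1) := hTleM (n+1)
    rw [hTrec n] at h1
    unfold lazySeq lazyDigit
    refine min_le_of_right_le ?_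
    rw [← hr, Int.toNat_le, Int.ceil_le]
    push_cast
    linarith
  exact ⟨lexle_of_prefix _ _ hle_lazy, lexle_of_prefix _ _ hle_greedy⟩
end

section
/- If 1 < β < G where G = (1+√5)/2 is the golden ratio, then every x ∈ (0, 1/(β-1)) has at least two distinct representations of the form x = Σ_{n≥1} ε_n β^{-n} with ε_n ∈ {0,1}. (In fact it has continuum many, but two distinct ones suffice to state non-uniqueness.) -/
/-!
Write `M = 1/(β-1)`. A point `x` of the switch region `[1/β, M/β]` has two expansions, one
starting with `0` and one with `1`, since both `βx` and `βx - 1` lie in `[0, M]` and have a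
(greedy) expansion. A point of `(0, M/β]` below the switch region is pushed into it by
prepending zeros (`x ↦ βx`): as long as `x < 1/β` we get `βx < 1 ≤ M/β`, which is where
`β² ≤ β + 1` enters. Points above `M/β` are handled by the symmetry `x ↦ M - x`, which flips
every digit and maps `(M/β, M)` into `(0, 1/β)`.
-/

open Set Filter Finset Topology

structure IsBinaryExpansion (β x : ℝ) (ε : ℕ → ℕ) : Prop where
  le_one : ∀ n, ε n ≤ 1
  hasSum : HasSum (fun n => (ε n : ℝ) / β ^ (n + 1)) x

def HasDistinctBinaryExpansions (β x : ℝ) : Prop :=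
  ∃ ε ε', IsBinaryExpansion β x ε ∧ IsBinaryExpansion β x ε' ∧ ε ≠ ε'

theorem hasSum_div_pow_of_remainders {β C : ℝ} (hβ : 1 < β) {d : ℕ → ℕ} {r : ℕ → ℝ}
    (hr : ∀ n, r n = (d n + r (n + 1)) / β) (hC : ∀ n, |r n| ≤ C) :
    HasSum (fun n => (d n : ℝ) / β ^ (n + 1)) (r 0) := by
  have hβ0 : 0 < β := zero_lt_one.trans hβ
  have partial_sum : ∀ n, ∑ i ∈ range n, (d i : ℝ) / β ^ (i + 1) = r 0 - r n / β ^ n := by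
    intro n
    induction n with
    | zero => simp
    | succ n ih =>
      rw [sum_range_succ, ih, hr n]
      field_simp
      ring
  have remainder_tendsto : Tendsto (fun n => r n / β ^ n) atTop (𝓝 0) := by
    refine squeeze_zero_norm (fun n => ?_) (by simpa using (tendsto_pow_atTop_nhds_zero_of_lt_one
      (inv_nonneg.2 hβ0.le) (inv_lt_one_of_one_lt₀ hβ)).const_mul C)
    rw [Real.norm_eq_abs, abs_div, abs_of_pos (pow_pos hβ0 n), ← div_eq_mul_inv]
    exact div_le_div_of_nonneg_right (hC n) (pow_nonneg hβ0.le n)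
  refine (hasSum_iff_tendsto_nat_of_nonneg (fun n => by positivity) _).2 ?_
  simp_rw [partial_sum]
  simpa using tendsto_const_nhds.sub remainder_tendsto

noncomputable def greedyDigit (β y : ℝ) : ℕ := if 1 ≤ β * y then 1 else 0

noncomputable def greedyMap (β y : ℝ) : ℝ := β * y - greedyDigit β y

theorem greedyDigit_le_one (β y : ℝ) : greedyDigit β y ≤ 1 := by
  unfold greedyDigit; split_ifs <;> simp

theorem mapsTo_greedyMap {β : ℝ} (hβ1 : 1 < β) (hβ2 : β ≤ 2) :
    MapsTo (greedyMap β) (Icc 0 (β - 1)⁻¹) (Icc 0 (β - 1)⁻¹) := by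
  intro y ⟨hy0, hyM⟩
  have hM : β * (β - 1)⁻¹ = (β - 1)⁻¹ + 1 := by field_simp [(sub_pos.2 hβ1).ne']; ring
  have one_le_M : 1 ≤ (β - 1)⁻¹ := one_le_inv₀ (by linarith) |>.2 (by linarith)
  have hβy : β * y ≤ β * (β - 1)⁻¹ := mul_le_mul_of_nonneg_left hyM (by linarith)
  unfold greedyMap greedyDigit
  split_ifs
  · constructor <;> push_cast <;> linarith
  · constructor <;> push_cast <;> nlinarith

theorem exists_isBinaryExpansion {β y : ℝ} (hβ1 : 1 < β) (hβ2 : β ≤ 2)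
    (hy : y ∈ Icc 0 (β - 1)⁻¹) : ∃ ε, IsBinaryExpansion β y ε := by
  set r : ℕ → ℝ := fun n => (greedyMap β)^[n] y
  have hr : ∀ n, r n = (greedyDigit β (r n) + r (n + 1)) / β := by
    intro n
    simp only [r, Function.iterate_succ_apply', greedyMap]
    field_simp
    ring
  have hC : ∀ n, |r n| ≤ (β - 1)⁻¹ := fun n =>
    have h := (mapsTo_greedyMap hβ1 hβ2).iterate n hy
    abs_le.2 ⟨by linarith [h.1, inv_nonneg.2 (sub_pos.2 hβ1).le], h.2⟩
  exact ⟨_, ⟨fun n => greedyDigit_le_one β (r n), hasSum_div_pow_of_remainders hβ1 hr hC⟩⟩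

namespace IsBinaryExpansion

variable {β x : ℝ} {ε : ℕ → ℕ}

theorem cons {b : ℕ} (hβ : β ≠ 0) (hb : b ≤ 1) (h : IsBinaryExpansion β (β * x - b) ε) :
    IsBinaryExpansion β x (Stream'.cons b ε) := by
  refine ⟨fun n => ?_, ?_⟩
  · cases n
    exacts [hb, h.le_one _]
  · have tail : HasSum (fun n => ((Stream'.cons b ε (n + 1) : ℕ) : ℝ) / β ^ (n + 1 + 1))
        ((β * x - b) / β) := by
      have := h.hasSum.div_const β
      simp only [div_div, ← pow_succ] at this
      exact this
    have head : ((Stream'.cons b ε 0 : ℕ) : ℝ) / β ^ (0 + 1) + (β * x - b) / β = x := by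
      simp only [Stream'.cons, zero_add, pow_one]
      field_simp
      ring
    exact head ▸ HasSum.zero_add (f := fun n => ((Stream'.cons b ε n : ℕ) : ℝ) / β ^ (n + 1)) tail

theorem reflect (hβ : 1 < β) (h : IsBinaryExpansion β x ε) :
    IsBinaryExpansion β ((β - 1)⁻¹ - x) (fun n => 1 - ε n) := by
  have hβ0 : 0 < β := zero_lt_one.trans hβ
  have geom : HasSum (fun n : ℕ => 1 / β ^ (n + 1)) (β - 1)⁻¹ := by
    have := (hasSum_geometric_of_lt_one (inv_nonneg.2 hβ0.le) (inv_lt_one_of_one_lt₀ hβ)).mul_left β⁻¹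
    rw [show β⁻¹ * (1 - β⁻¹)⁻¹ = (β - 1)⁻¹ by field_simp] at this
    simpa [pow_succ', mul_inv, mul_comm] using this
  have digits : (fun n => ((1 - ε n : ℕ) : ℝ) / β ^ (n + 1)) =
      fun n => 1 / β ^ (n + 1) - ε n / β ^ (n + 1) := by
    ext n
    rw [Nat.cast_sub (h.le_one n), Nat.cast_one, sub_div]
  exact ⟨fun n => Nat.sub_le 1 _, digits ▸ geom.sub h.hasSum⟩

end IsBinaryExpansion

/-- The points at which both digits are admissible: `β x ∈ [0, M]` and `β x - 1 ∈ [0, M]`. -/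
noncomputable def switchRegion (β : ℝ) : Set ℝ := Icc β⁻¹ (β * (β - 1))⁻¹

namespace HasDistinctBinaryExpansions

variable {β x : ℝ}

theorem cons {b : ℕ} (hβ : β ≠ 0) (hb : b ≤ 1)
    (h : HasDistinctBinaryExpansions β (β * x - b)) : HasDistinctBinaryExpansions β x := by
  obtain ⟨ε, ε', hε, hε', hne⟩ := h
  exact ⟨_, _, hε.cons hβ hb, hε'.cons hβ hb, fun h => hne (funext fun n => congrFun h (n + 1))⟩

theorem reflect (hβ : 1 < β) (h : HasDistinctBinaryExpansions β x) :
    HasDistinctBinaryExpansions β ((β - 1)⁻¹ - x) := by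
  obtain ⟨ε, ε', hε, hε', hne⟩ := h
  refine ⟨_, _, hε.reflect hβ, hε'.reflect hβ, fun h => hne (funext fun n => ?_)⟩
  have := congrFun h n
  have := hε.le_one n
  have := hε'.le_one n
  omega

end HasDistinctBinaryExpansions

theorem hasDistinctBinaryExpansions_of_mem_switchRegion {β x : ℝ} (hβ1 : 1 < β) (hβ2 : β ≤ 2)
    (hx : x ∈ switchRegion β) : HasDistinctBinaryExpansions β x := by
  have hβ0 : 0 < β := zero_lt_one.trans hβ1
  have hβx : 1 ≤ β * x := by simpa [hβ0.ne'] using mul_le_mul_of_nonneg_left hx.1 hβ0.le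
  have hβxM : β * x ≤ (β - 1)⁻¹ :=
    calc β * x ≤ β * (β * (β - 1))⁻¹ := mul_le_mul_of_nonneg_left hx.2 hβ0.le
      _ = (β - 1)⁻¹ := by field_simp
  obtain ⟨ε, hε⟩ := exists_isBinaryExpansion (y := β * x - (0 : ℕ)) hβ1 hβ2
    ⟨by push_cast; linarith, by push_cast; linarith⟩
  obtain ⟨ε', hε'⟩ := exists_isBinaryExpansion (y := β * x - (1 : ℕ)) hβ1 hβ2
    ⟨by push_cast; linarith, by push_cast; linarith⟩
  exact ⟨_, _, hε.cons hβ0.ne' zero_le_one, hε'.cons hβ0.ne' le_rfl,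
    fun h => by simpa [Stream'.cons] using congrFun h 0⟩

theorem hasDistinctBinaryExpansions_of_pos_of_le {β x : ℝ} (hβ1 : 1 < β) (hβ : β ^ 2 ≤ β + 1)
    (hx0 : 0 < x) (hx : x ≤ (β * (β - 1))⁻¹) : HasDistinctBinaryExpansions β x := by
  have hβ0 : 0 < β := zero_lt_one.trans hβ1
  have hβ2 : β ≤ 2 := by nlinarith
  have one_le : 1 ≤ (β * (β - 1))⁻¹ := (one_le_inv₀ (by nlinarith)).2 (by nlinarith)
  obtain ⟨n, hn⟩ := pow_unbounded_of_one_lt (β⁻¹ / x) hβ1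
  replace hn : β⁻¹ ≤ β ^ n * x := by rw [div_lt_iff₀ hx0] at hn; linarith
  induction n generalizing x with
  | zero => exact hasDistinctBinaryExpansions_of_mem_switchRegion hβ1 hβ2 ⟨by simpa using hn, hx⟩
  | succ n ih =>
    by_cases h : β⁻¹ ≤ x
    · exact hasDistinctBinaryExpansions_of_mem_switchRegion hβ1 hβ2 ⟨h, hx⟩
    · refine HasDistinctBinaryExpansions.cons (b := 0) hβ0.ne' zero_le_one ?_
      rw [Nat.cast_zero, sub_zero]
      have hβx : β * x < 1 := by
        simpa [hβ0.ne'] using mul_lt_mul_of_pos_left (not_le.1 h) hβ0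
      exact ih (by positivity) (by linarith) (by rwa [← mul_assoc, ← pow_succ])

theorem sq_lt_add_one_of_lt_goldenRatio {β : ℝ} (h0 : 0 ≤ β) (h : β < Real.goldenRatio) :
    β ^ 2 < β + 1 := by
  nlinarith [Real.goldenRatio_sq, Real.one_lt_goldenRatio]

/-- if `1 < β < G` with `G = (1+√5)/2`, then every `x ∈ (0, 1/(β-1))` has at
least two distinct binary `β`-representations `x = Σ ε_n β^{-n}` with `ε_n ∈ {0,1}`. -/
theorem two_representations_below_golden_ratio
    (β : ℝ) (hβ1 : 1 < β) (hβG : β < (1 + Real.sqrt 5) / 2)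
    (x : ℝ) (hx : x ∈ Set.Ioo (0 : ℝ) (1 / (β - 1))) :
    ∃ ε ε' : ℕ → ℕ, (∀ n, ε n ≤ 1) ∧ (∀ n, ε' n ≤ 1) ∧
      x = ∑' n : ℕ, (ε n : ℝ) / β ^ (n + 1) ∧
      x = ∑' n : ℕ, (ε' n : ℝ) / β ^ (n + 1) ∧ ε ≠ ε' := by
  have hβ : β ^ 2 ≤ β + 1 := (sq_lt_add_one_of_lt_goldenRatio (by linarith) hβG).le
  obtain ⟨hx0, hxM⟩ := hx
  rw [one_div] at hxM
  suffices HasDistinctBinaryExpansions β x by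
    obtain ⟨ε, ε', hε, hε', hne⟩ := this
    exact ⟨ε, ε', hε.le_one, hε'.le_one, hε.hasSum.tsum_eq.symm, hε'.hasSum.tsum_eq.symm, hne⟩
  rcases le_or_gt x (β * (β - 1))⁻¹ with hle | hgt
  · exact hasDistinctBinaryExpansions_of_pos_of_le hβ1 hβ hx0 hle
  · have hM : (β - 1)⁻¹ - (β * (β - 1))⁻¹ = β⁻¹ := by
      field_simp [(sub_pos.2 hβ1).ne']
    have h_le : β⁻¹ ≤ (β * (β - 1))⁻¹ := inv_anti₀ (by nlinarith) (by nlinarith)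
    simpa using (hasDistinctBinaryExpansions_of_pos_of_le (x := (β - 1)⁻¹ - x) hβ1 hβ
      (by linarith) (by linarith)).reflect hβ1
end

section
/- For every β ∈ (1,2), the set of x ∈ (0, 1/(β-1)) that have a unique representation x = Σ_{n≥1} ε_n β^{-n} with digits ε_n ∈ {0,1} has Lebesgue measure zero. -/
/-!
If `x` has a unique expansion `ε`, write `x = p_n + u / β ^ n` with `p_n` the `n`-th partial sum.
Whenever `1 ≤ β u ≤ 1 / (β - 1)`, both `β u` and `β u - 1` lie in `[0, 1 / (β - 1)]` and so have
(greedy, since `β ≤ 2`) expansions; prefixing them by `ε_0 … ε_{n-1} 0` resp. `ε_0 … ε_{n-1} 1`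
gives two expansions of the same point. Hence for each `n` the interval
`(p_n + β^{-(n+1)}, p_n + β^{-(n+1)} / (β - 1))`, which lies in the ball of radius
`β^{-n} / (β - 1)` around `x` and has length `(2 - β) / β` times that radius, contains no point with a
unique expansion. So the set of such points is porous, and the Lebesgue density theorem makes it
null.
-/

open MeasureTheory Filter Metric Set Topology Finset
open scoped ENNReal

section Density

variable {α : Type*} [MetricSpace α] [MeasurableSpace α] [BorelSpace α]
  [SecondCountableTopology α] [HasBesicovitchCovering α]

theorem measure_eq_zero_of_frequently_density_le (μ : Measure α) [IsLocallyFiniteMeasure μ]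
    {s : Set α} {c : ℝ≥0∞} (hc : c < 1)
    (h : ∀ x ∈ s, ∃ᶠ r in 𝓝[>] 0, μ (s ∩ closedBall x r) / μ (closedBall x r) ≤ c) :
    μ s = 0 := by
  rw [← Measure.restrict_apply_self]
  refine measure_mono_null (fun x hx => ?_)
    (ae_iff.1 (Besicovitch.ae_tendsto_measure_inter_div μ s))
  intro hdens
  obtain ⟨r, hle, hlt⟩ := ((h x hx).and_eventually (hdens.eventually (lt_mem_nhds hc))).exists
  exact hle.not_gt hlt

end Density

theorem Real.volume_inter_closedBall_div_le_of_disjoint {s : Set ℝ} {x r a κ : ℝ}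
    (hr : 0 < r) (hκ : 0 ≤ κ) (hsub : Ioo a (a + κ * r) ⊆ closedBall x r)
    (hdisj : Disjoint s (Ioo a (a + κ * r))) :
    volume (s ∩ closedBall x r) / volume (closedBall x r) ≤ ENNReal.ofReal (1 - κ / 2) := by
  have hball : volume (closedBall x r) = ENNReal.ofReal (2 * r) := by
    rw [Real.volume_closedBall, two_mul]
  calc volume (s ∩ closedBall x r) / volume (closedBall x r)
      ≤ volume (closedBall x r \ Ioo a (a + κ * r)) / volume (closedBall x r) := by
        gcongr
        exact fun y ⟨hys, hyB⟩ => ⟨hyB, hdisj.notMem_of_mem_left hys⟩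
    _ = ENNReal.ofReal (2 * r - κ * r) / ENNReal.ofReal (2 * r) := by
        rw [measure_sdiff hsub measurableSet_Ioo.nullMeasurableSet measure_Ioo_lt_top.ne,
          Real.volume_Ioo, hball, add_sub_cancel_left, ENNReal.ofReal_sub _ (by positivity)]
    _ = ENNReal.ofReal (1 - κ / 2) := by
        rw [← ENNReal.ofReal_div_of_pos (by positivity)]
        congr 1
        field_simp

theorem Real.volume_eq_zero_of_porous {s : Set ℝ} {κ : ℝ} (hκ : 0 < κ)
    (h : ∀ x ∈ s, ∃ᶠ r in 𝓝[>] 0, ∃ a, Ioo a (a + κ * r) ⊆ closedBall x r ∧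
      Disjoint s (Ioo a (a + κ * r))) :
    volume s = 0 := by
  refine measure_eq_zero_of_frequently_density_le volume
    (ENNReal.ofReal_lt_one.2 (by linarith : 1 - κ / 2 < 1)) fun x hx => ?_
  refine ((h x hx).and_eventually self_mem_nhdsWithin).mono ?_
  rintro r ⟨⟨a, hsub, hdisj⟩, hr⟩
  exact Real.volume_inter_closedBall_div_le_of_disjoint hr hκ.le hsub hdisj

namespace BetaExpansion

variable {β : ℝ}

noncomputable def value (β : ℝ) (ε : ℕ → ℕ) : ℝ := ∑' n, (ε n : ℝ) / β ^ (n + 1)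

theorem tsum_inv_pow_succ (hβ : 1 < β) : ∑' n : ℕ, (β⁻¹) ^ (n + 1) = 1 / (β - 1) := by
  simp_rw [pow_succ']
  rw [tsum_mul_left, tsum_geometric_of_lt_one (by positivity) (inv_lt_one_of_one_lt₀ hβ)]
  field_simp

theorem digit_div_pow_le {ε : ℕ → ℕ} (hε : ∀ n, ε n ≤ 1) (hβ : 0 < β) (n : ℕ) :
    (ε n : ℝ) / β ^ (n + 1) ≤ β⁻¹ ^ (n + 1) := by
  rw [inv_pow, div_eq_mul_inv]
  exact mul_le_of_le_one_left (by positivity) (by exact_mod_cast hε n)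

theorem summable_inv_pow_succ (hβ : 1 < β) : Summable fun n : ℕ => β⁻¹ ^ (n + 1) :=
  (summable_nat_add_iff 1).2
    (summable_geometric_of_lt_one (by positivity) (inv_lt_one_of_one_lt₀ hβ))

theorem summable_digit_div_pow {ε : ℕ → ℕ} (hε : ∀ n, ε n ≤ 1) (hβ : 1 < β) :
    Summable fun n => (ε n : ℝ) / β ^ (n + 1) :=
  .of_nonneg_of_le (fun n => by positivity) (digit_div_pow_le hε (by positivity))
    (summable_inv_pow_succ hβ)

theorem value_nonneg (hβ : 0 ≤ β) (ε : ℕ → ℕ) : 0 ≤ value β ε :=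
  tsum_nonneg fun n => by positivity

theorem value_le {ε : ℕ → ℕ} (hε : ∀ n, ε n ≤ 1) (hβ : 1 < β) : value β ε ≤ 1 / (β - 1) := by
  rw [← tsum_inv_pow_succ hβ]
  exact (summable_digit_div_pow hε hβ).tsum_le_tsum (digit_div_pow_le hε (by positivity))
    (summable_inv_pow_succ hβ)

theorem value_eq_sum_add_value_shift {ε : ℕ → ℕ} (hε : ∀ n, ε n ≤ 1) (hβ : 1 < β) (n : ℕ) :
    value β ε = ∑ k ∈ range n, (ε k : ℝ) / β ^ (k + 1) + value β (fun k => ε (k + n)) / β ^ n := by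
  rw [value, ← (summable_digit_div_pow hε hβ).sum_add_tsum_nat_add n, value, ← tsum_div_const]
  congr 1
  refine tsum_congr fun k => ?_
  rw [div_div, ← pow_add, add_right_comm k 1 n]

def prepend (n : ℕ) (w g : ℕ → ℕ) : ℕ → ℕ := fun k => if k < n then w k else g (k - n)

theorem prepend_le_one {w g : ℕ → ℕ} (hw : ∀ k, w k ≤ 1) (hg : ∀ k, g k ≤ 1) (n k : ℕ) :
    prepend n w g k ≤ 1 := by
  unfold prepend
  split_ifs
  exacts [hw k, hg _]

theorem value_prepend {w g : ℕ → ℕ} (hw : ∀ k, w k ≤ 1) (hg : ∀ k, g k ≤ 1) (hβ : 1 < β)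
    (n : ℕ) :
    value β (prepend n w g) = ∑ k ∈ range n, (w k : ℝ) / β ^ (k + 1) + value β g / β ^ n := by
  rw [value_eq_sum_add_value_shift (prepend_le_one hw hg n) hβ n]
  have hshift : (fun k => prepend n w g (k + n)) = g := funext fun k => by simp [prepend]
  rw [hshift]
  congr 1
  refine sum_congr rfl fun k hk => ?_
  simp [prepend, mem_range.1 hk]

noncomputable def greedyDigit (β t : ℝ) : ℕ := if 1 ≤ β * t then 1 else 0

noncomputable def greedyMap (β t : ℝ) : ℝ := β * t - greedyDigit β t

theorem greedyDigit_le_one (β t : ℝ) : greedyDigit β t ≤ 1 := by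
  unfold greedyDigit
  split_ifs <;> simp

theorem mapsTo_greedyMap (hβ1 : 1 < β) (hβ2 : β ≤ 2) :
    MapsTo (greedyMap β) (Icc 0 (1 / (β - 1))) (Icc 0 (1 / (β - 1))) := by
  rintro t ⟨ht0, htL⟩
  have hβL : β * (1 / (β - 1)) = 1 + 1 / (β - 1) := by
    have : β - 1 ≠ 0 := by linarith
    field_simp
    ring
  have hL : 1 ≤ 1 / (β - 1) := by
    rw [le_div_iff₀ (by linarith)]
    linarith
  have hβt : β * t ≤ β * (1 / (β - 1)) := by gcongr
  unfold greedyMap greedyDigit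
  split_ifs with h
  · constructor <;> push_cast <;> linarith
  · constructor <;> push_cast <;> nlinarith

theorem sum_greedyDigit_add_iterate (hβ : β ≠ 0) (t : ℝ) (n : ℕ) :
    ∑ k ∈ range n, (greedyDigit β ((greedyMap β)^[k] t) : ℝ) / β ^ (k + 1)
      + (greedyMap β)^[n] t / β ^ n = t := by
  induction n with
  | zero => simp
  | succ n ih =>
    rw [sum_range_succ, Function.iterate_succ_apply', add_assoc]
    conv_rhs => rw [← ih]
    congr 1
    generalize (greedyMap β)^[n] t = s
    rw [greedyMap]
    field_simp
    ring

theorem exists_value_eq (hβ1 : 1 < β) (hβ2 : β ≤ 2) {t : ℝ} (ht : t ∈ Icc 0 (1 / (β - 1))) :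
    ∃ ε : ℕ → ℕ, (∀ n, ε n ≤ 1) ∧ value β ε = t := by
  refine ⟨fun k => greedyDigit β ((greedyMap β)^[k] t), fun k => greedyDigit_le_one _ _, ?_⟩
  refine (((hasSum_iff_tendsto_nat_of_nonneg (fun k => by positivity) t)).2 ?_).tsum_eq
  have hrem : Tendsto (fun n => (greedyMap β)^[n] t / β ^ n) atTop (𝓝 0) :=
    squeeze_zero (fun n => div_nonneg ((mapsTo_greedyMap hβ1 hβ2).iterate n ht).1 (by positivity))
      (fun n => div_le_div_of_nonneg_right ((mapsTo_greedyMap hβ1 hβ2).iterate n ht).2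
        (by positivity))
      (tendsto_const_nhds.div_atTop (tendsto_pow_atTop_atTop_of_one_lt hβ1))
  simpa using ((tendsto_const_nhds (x := t)).sub hrem).congr fun n =>
    (eq_sub_of_add_eq (sum_greedyDigit_add_iterate (by positivity) t n)).symm

theorem exists_value_eq_of_head_eq (hβ1 : 1 < β) (hβ2 : β ≤ 2) {d : ℕ} (hd : d ≤ 1) {u : ℝ}
    (hu : β * u - d ∈ Icc 0 (1 / (β - 1))) :
    ∃ v : ℕ → ℕ, (∀ n, v n ≤ 1) ∧ v 0 = d ∧ value β v = u := by
  obtain ⟨g, hg, hgu⟩ := exists_value_eq hβ1 hβ2 hu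
  refine ⟨prepend 1 (fun _ => d) g, prepend_le_one (fun _ => hd) hg 1, by simp [prepend], ?_⟩
  rw [value_prepend (fun _ => hd) hg hβ1, hgu, sum_range_one]
  field_simp
  ring

theorem not_existsUnique_of_one_le_mul_le (hβ1 : 1 < β) (hβ2 : β ≤ 2) {w : ℕ → ℕ}
    (hw : ∀ k, w k ≤ 1) (n : ℕ) {u : ℝ} (hu1 : 1 ≤ β * u) (hu2 : β * u ≤ 1 / (β - 1)) :
    ¬ ∃! ε : ℕ → ℕ, (∀ k, ε k ≤ 1) ∧
      ∑ k ∈ range n, (w k : ℝ) / β ^ (k + 1) + u / β ^ n = value β ε := by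
  obtain ⟨v₀, hv₀, hv₀0, hv₀u⟩ := exists_value_eq_of_head_eq hβ1 hβ2 zero_le_one (u := u)
    ⟨by push_cast; linarith, by push_cast; linarith⟩
  obtain ⟨v₁, hv₁, hv₁0, hv₁u⟩ := exists_value_eq_of_head_eq hβ1 hβ2 le_rfl (u := u)
    ⟨by push_cast; linarith, by push_cast; linarith⟩
  intro huniq
  have h := huniq.unique
    ⟨prepend_le_one hw hv₀ n, by rw [value_prepend hw hv₀ hβ1, hv₀u]⟩
    ⟨prepend_le_one hw hv₁ n, by rw [value_prepend hw hv₁ hβ1, hv₁u]⟩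
  simpa [prepend, hv₀0, hv₁0] using congrFun h n

theorem Ioo_subset_closedBall_value {ε : ℕ → ℕ} (hε : ∀ k, ε k ≤ 1) (hβ : 1 < β) (n : ℕ) :
    Ioo (∑ k ∈ range n, (ε k : ℝ) / β ^ (k + 1) + 1 / β ^ (n + 1))
        (∑ k ∈ range n, (ε k : ℝ) / β ^ (k + 1) + 1 / (β - 1) / β ^ (n + 1)) ⊆
      closedBall (value β ε) (1 / (β - 1) / β ^ n) := by
  have hV0 := value_nonneg (by positivity) fun k => ε (k + n)
  have hVL := value_le (fun k => hε (k + n)) hβ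
  have hVn : value β (fun k => ε (k + n)) / β ^ n ≤ 1 / (β - 1) / β ^ n := by gcongr
  have hpow : 1 / (β - 1) / β ^ (n + 1) ≤ 1 / (β - 1) / β ^ n := by
    have : 0 < β - 1 := by linarith
    gcongr
    exacts [hβ.le, n.le_succ]
  have hVn0 : 0 ≤ value β (fun k => ε (k + n)) / β ^ n := by positivity
  have hhole0 : (0 : ℝ) ≤ 1 / β ^ (n + 1) := by positivity
  rw [Real.closedBall_eq_Icc, value_eq_sum_add_value_shift hε hβ n]
  exact fun y ⟨hy1, hy2⟩ => ⟨by linarith, by linarith⟩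

theorem disjoint_setOf_existsUnique_Ioo (hβ1 : 1 < β) (hβ2 : β ≤ 2) {w : ℕ → ℕ}
    (hw : ∀ k, w k ≤ 1) (n : ℕ) :
    Disjoint {x : ℝ | ∃! ε : ℕ → ℕ, (∀ k, ε k ≤ 1) ∧ x = value β ε}
      (Ioo (∑ k ∈ range n, (w k : ℝ) / β ^ (k + 1) + 1 / β ^ (n + 1))
        (∑ k ∈ range n, (w k : ℝ) / β ^ (k + 1) + 1 / (β - 1) / β ^ (n + 1))) := by
  rw [Set.disjoint_right]
  rintro y ⟨hy1, hy2⟩ huniq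
  set p := ∑ k ∈ range n, (w k : ℝ) / β ^ (k + 1)
  have hy : p + β ^ n * (y - p) / β ^ n = y := by field_simp; ring
  have hscale : β * (β ^ n * (y - p)) = (y - p) * β ^ (n + 1) := by ring
  refine not_existsUnique_of_one_le_mul_le hβ1 hβ2 hw n (u := β ^ n * (y - p)) ?_ ?_ (by rwa [hy])
  · rw [hscale]
    exact ((div_lt_iff₀ (by positivity)).1 (by linarith)).le
  · rw [hscale]
    exact ((lt_div_iff₀ (by positivity)).1 (by linarith)).le

theorem volume_setOf_existsUnique_eq_zero (hβ1 : 1 < β) (hβ2 : β < 2) :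
    volume {x : ℝ | ∃! ε : ℕ → ℕ, (∀ n, ε n ≤ 1) ∧ x = value β ε} = 0 := by
  have hβ1' : 0 < β - 1 := by linarith
  refine Real.volume_eq_zero_of_porous (κ := (2 - β) / β) (div_pos (by linarith) (by linarith))
    fun x ⟨ε, ⟨hε, hx⟩, _⟩ => ?_
  have hr : Tendsto (fun n : ℕ => 1 / (β - 1) / β ^ n) atTop (𝓝[>] 0) :=
    tendsto_nhdsWithin_iff.2 ⟨tendsto_const_nhds.div_atTop
      (tendsto_pow_atTop_atTop_of_one_lt hβ1), .of_forall fun n => mem_Ioi.2 (by positivity)⟩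
  refine hr.frequently (.of_forall fun n =>
    ⟨∑ k ∈ range n, (ε k : ℝ) / β ^ (k + 1) + 1 / β ^ (n + 1), ?_⟩)
  have hκ : 1 / β ^ (n + 1) + (2 - β) / β * (1 / (β - 1) / β ^ n)
      = 1 / (β - 1) / β ^ (n + 1) := by
    field_simp
    ring
  rw [add_assoc, hκ, hx]
  exact ⟨Ioo_subset_closedBall_value hε hβ1 n, disjoint_setOf_existsUnique_Ioo hβ1 hβ2.le hε n⟩

end BetaExpansion

/-- for every `β ∈ (1,2)`, the set of `x ∈ (0, 1/(β-1))` having a unique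
binary representation `x = Σ ε_n β^{-n}` with `ε_n ∈ {0,1}` has Lebesgue measure zero. -/
theorem unique_representations_measure_zero
    (β : ℝ) (hβ : β ∈ Set.Ioo (1 : ℝ) 2) :
    volume {x : ℝ | x ∈ Set.Ioo (0 : ℝ) (1 / (β - 1)) ∧
      ∃! ε : ℕ → ℕ, (∀ n, ε n ≤ 1) ∧ x = ∑' n : ℕ, (ε n : ℝ) / β ^ (n + 1)} = 0 :=
  measure_mono_null (fun _ hx => hx.2) (BetaExpansion.volume_setOf_existsUnique_eq_zero hβ.1 hβ.2)
end

section
/- If β ∈ (1, G] where G = (1+√5)/2, then no x ∈ (0, 1/(β-1)) has a unique binary β-representation; i.e., the set A'_β is empty. -/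
open Finset

noncomputable def grRem (β y : ℝ) : ℕ → ℝ
  | 0 => y
  | (k+1) => if 1 ≤ β * grRem β y k then β * grRem β y k - 1 else β * grRem β y k

noncomputable def grDig (β y : ℝ) (k : ℕ) : ℕ :=
  if 1 ≤ β * grRem β y k then 1 else 0

lemma grRem_succ (β y : ℝ) (k : ℕ) :
    grRem β y (k+1) = β * grRem β y k - grDig β y k := by
  rw [grRem, grDig]
  split <;> simp

lemma grDig_le_one (β y : ℝ) (k : ℕ) : grDig β y k ≤ 1 := by
  rw [grDig]; split <;> simp

lemma grRem_bounds {β y : ℝ} (hβ1 : 1 < β) (hβ2 : β < 2)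
    (h0 : 0 ≤ y) (h1 : y ≤ 1 / (β - 1)) (k : ℕ) :
    0 ≤ grRem β y k ∧ grRem β y k ≤ 1 / (β - 1) := by
  have hb0 : (0:ℝ) < β := by linarith
  have hb1 : (0:ℝ) < β - 1 := by linarith
  induction k with
  | zero => exact ⟨h0, h1⟩
  | succ k ih =>
    rw [grRem]
    split
    · rename_i h
      have hr : grRem β y k * (β - 1) ≤ 1 := (le_div_iff₀ hb1).1 ih.2
      have hr2 : β * (grRem β y k * (β - 1)) ≤ β * 1 :=
        mul_le_mul_of_nonneg_left hr hb0.le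
      constructor
      · linarith
      · rw [le_div_iff₀ hb1]; nlinarith
    · rename_i h
      push_neg at h
      constructor
      · exact mul_nonneg hb0.le ih.1
      · have : (1:ℝ) ≤ 1 / (β - 1) := by
          rw [le_div_iff₀ hb1]; linarith
        linarith

lemma grRem_partial {β y : ℝ} (hβ1 : 1 < β) (n : ℕ) :
    ∑ i ∈ range n, (grDig β y i : ℝ) / β ^ (i+1) = y - grRem β y n / β ^ n := by
  have hb0 : (0:ℝ) < β := by linarith
  induction n with
  | zero => simp [grRem]
  | succ n ih =>
    rw [Finset.sum_range_succ, ih, grRem_succ]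
    have hpow : β ^ (n+1) = β ^ n * β := pow_succ β n
    have hβn : (β:ℝ) ^ n ≠ 0 := by positivity
    field_simp [hpow]
    ring

/-- Existence of a binary expansion for any `y ∈ [0, 1/(β-1)]`, `1 < β < 2`. -/
lemma exists_expansion {β : ℝ} (hβ1 : 1 < β) (hβ2 : β < 2)
    {y : ℝ} (h0 : 0 ≤ y) (h1 : y ≤ 1 / (β - 1)) :
    ∃ δ : ℕ → ℕ, (∀ n, δ n ≤ 1) ∧ HasSum (fun n => (δ n : ℝ) / β ^ (n+1)) y := by
  have hb0 : (0:ℝ) < β := by linarith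
  have hb1 : (0:ℝ) < β - 1 := by linarith
  refine ⟨grDig β y, grDig_le_one β y, ?_⟩
  have hlt : 1 / β < 1 := by rw [div_lt_one hb0]; exact hβ1
  have hsg : Summable (fun n : ℕ => (1/β)^(n+1)) := by
    have h := summable_geometric_of_lt_one (by positivity : (0:ℝ) ≤ 1/β) hlt
    exact (summable_nat_add_iff 1).2 h
  have hsumm : Summable (fun n => (grDig β y n : ℝ) / β ^ (n+1)) := by
    refine Summable.of_nonneg_of_le (fun n => by positivity) (fun n => ?_) hsg
    rw [div_pow, one_pow]
    have h1' : ((grDig β y n : ℝ)) ≤ 1 := by exact_mod_cast grDig_le_one β y n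
    gcongr
  have htend : Filter.Tendsto (fun n => ∑ i ∈ range n, (grDig β y i : ℝ) / β ^ (i+1))
      Filter.atTop (nhds y) := by
    have heq : ∀ n, ∑ i ∈ range n, (grDig β y i : ℝ) / β ^ (i+1)
        = y - grRem β y n / β ^ n := fun n => grRem_partial hβ1 n
    simp only [heq]
    have h0' : Filter.Tendsto (fun n : ℕ => grRem β y n / β ^ n) Filter.atTop (nhds 0) := by
      apply squeeze_zero (fun n => by
        have := (grRem_bounds hβ1 hβ2 h0 h1 n).1; positivity)
        (g := fun n => (1/(β-1)) * (1/β)^n)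
      · intro n
        rw [div_pow, one_pow, div_le_iff₀ (by positivity), mul_assoc,
          one_div_mul_cancel (by positivity : (β:ℝ)^n ≠ 0), mul_one]
        exact (grRem_bounds hβ1 hβ2 h0 h1 n).2
      · have := tendsto_pow_atTop_nhds_zero_of_lt_one (by positivity : (0:ℝ) ≤ 1/β) hlt
        simpa using this.const_mul (1/(β-1))
    have := Filter.Tendsto.const_sub y h0'
    simpa using this
  have h2 := hsumm.hasSum.tendsto_sum_nat
  have heq := tendsto_nhds_unique h2 htend
  have h3 := hsumm.hasSum
  rwa [heq] at h3

lemma summable_digits {β : ℝ} (hβ1 : 1 < β) {ε : ℕ → ℕ} (hε : ∀ n, ε n ≤ 1) :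
    Summable (fun n => (ε n : ℝ) / β ^ (n+1)) := by
  have hb0 : (0:ℝ) < β := by linarith
  have hlt : 1 / β < 1 := by rw [div_lt_one hb0]; exact hβ1
  have hsg : Summable (fun n : ℕ => (1/β)^(n+1)) := by
    have h := summable_geometric_of_lt_one (by positivity : (0:ℝ) ≤ 1/β) hlt
    exact (summable_nat_add_iff 1).2 h
  refine Summable.of_nonneg_of_le (fun n => by positivity) (fun n => ?_) hsg
  rw [div_pow, one_pow]
  have h1' : ((ε n : ℝ)) ≤ 1 := by exact_mod_cast hε n
  gcongr

lemma geom_tail {β : ℝ} (hβ1 : 1 < β) (m : ℕ) :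
    ∑' k : ℕ, (1/β)^(k+m) = β/(β-1) * (1/β)^m := by
  have hb0 : (0:ℝ) < β := by linarith
  have hb1 : (0:ℝ) < β - 1 := by linarith
  have hlt : 1 / β < 1 := by rw [div_lt_one hb0]; exact hβ1
  simp only [pow_add]
  rw [tsum_mul_right, tsum_geometric_of_lt_one (by positivity) hlt]
  congr 1
  rw [show (1:ℝ) - 1/β = (β-1)/β by field_simp, inv_div]

/-- The modified digit sequence. -/
def modSeq (ε δ : ℕ → ℕ) (n d : ℕ) : ℕ → ℕ :=
  fun k => if k < n then ε k else if k = n then d else δ (k - (n+1))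

lemma exists_other {β : ℝ} (hβ1 : 1 < β) (hβ2 : β < 2) (ε : ℕ → ℕ)
    (hεle : ∀ k, ε k ≤ 1) (n d : ℕ) (hd : d ≤ 1)
    {y : ℝ} (h0 : 0 ≤ y) (h1 : y ≤ 1 / (β - 1)) :
    ∃ ε' : ℕ → ℕ, (∀ k, ε' k ≤ 1) ∧ ε' n = d ∧
      ∑' k : ℕ, (ε' k : ℝ) / β ^ (k+1)
        = (∑ i ∈ Finset.range n, (ε i : ℝ) / β ^ (i+1)) + (d : ℝ)/β^(n+1) + y/β^(n+1) := by
  have hb0 : (0:ℝ) < β := by linarith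
  obtain ⟨δ, hδle, hδsum⟩ := exists_expansion hβ1 hβ2 h0 h1
  refine ⟨modSeq ε δ n d, ?_, ?_, ?_⟩
  · intro k
    unfold modSeq
    split_ifs with h1 h2
    · exact hεle k
    · exact hd
    · exact hδle _
  · unfold modSeq; simp
  · have hε'le : ∀ k, modSeq ε δ n d k ≤ 1 := by
      intro k
      unfold modSeq
      split_ifs with h1 h2
      · exact hεle k
      · exact hd
      · exact hδle _
    have hsum' : Summable (fun k => (modSeq ε δ n d k : ℝ)/β^(k+1)) :=
      summable_digits hβ1 hε'le
    have htailfun : ∀ k : ℕ, (modSeq ε δ n d (k+(n+1)) : ℝ)/β^((k+(n+1))+1)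
        = (δ k : ℝ)/β^(k+1)/β^(n+1) := by
      intro k
      have h1 : ¬(k+(n+1) < n) := by omega
      have h2 : ¬(k+(n+1) = n) := by omega
      have h3 : k+(n+1)-(n+1) = k := by omega
      unfold modSeq
      rw [if_neg h1, if_neg h2, h3, div_div, ← pow_add]
      congr 2
      omega
    have htail : HasSum (fun k => (modSeq ε δ n d (k+(n+1)) : ℝ)/β^((k+(n+1))+1))
        (y/β^(n+1)) := by
      have h := hδsum.div_const (β^(n+1))
      rwa [show (fun k => (modSeq ε δ n d (k+(n+1)) : ℝ)/β^((k+(n+1))+1))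
        = fun k => (δ k:ℝ)/β^(k+1)/β^(n+1) from funext htailfun]
    calc ∑' k, (modSeq ε δ n d k : ℝ)/β^(k+1)
        = (∑ i ∈ Finset.range (n+1), (modSeq ε δ n d i : ℝ)/β^(i+1))
          + ∑' k, (modSeq ε δ n d (k+(n+1)) : ℝ)/β^((k+(n+1))+1) :=
          (Summable.sum_add_tsum_nat_add (n+1) hsum').symm
      _ = (∑ i ∈ Finset.range n, (ε i : ℝ) / β ^ (i+1)) + (d : ℝ)/β^(n+1) + y/β^(n+1) := by
          rw [Finset.sum_range_succ, htail.tsum_eq]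
          have hA : ∑ i ∈ Finset.range n, (modSeq ε δ n d i : ℝ)/β^(i+1)
              = ∑ i ∈ Finset.range n, (ε i : ℝ)/β^(i+1) :=
            Finset.sum_congr rfl (fun i hi => by
              unfold modSeq; rw [if_pos (Finset.mem_range.1 hi)])
          have hn : (modSeq ε δ n d n : ℝ) = d := by unfold modSeq; simp
          rw [hA, hn]

/-- if `β ∈ (1, G]` with `G = (1+√5)/2` the golden ratio, then no
`x ∈ (0, 1/(β-1))` has a unique binary `β`-representation, i.e. `A'_β = ∅`. -/
theorem no_unique_representation_up_to_golden_ratio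
    (β : ℝ) (hβ1 : 1 < β) (hβG : β ≤ (1 + Real.sqrt 5) / 2) :
    {x : ℝ | x ∈ Set.Ioo (0 : ℝ) (1 / (β - 1)) ∧
      ∃! ε : ℕ → ℕ, (∀ n, ε n ≤ 1) ∧ x = ∑' n : ℕ, (ε n : ℝ) / β ^ (n + 1)} = ∅ := by
  have hs5 : Real.sqrt 5 ^ 2 = 5 := Real.sq_sqrt (by norm_num)
  have hs5n : (0:ℝ) ≤ Real.sqrt 5 := Real.sqrt_nonneg 5
  have hβ2 : β < 2 := by nlinarith [sq_nonneg (Real.sqrt 5 - 3)]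
  have hgold : β^2 ≤ β + 1 := by
    nlinarith [mul_nonneg (sub_nonneg.2 hβG)
      (show (0:ℝ) ≤ β + (Real.sqrt 5 - 1)/2 by nlinarith [sq_nonneg (Real.sqrt 5 - 1)])]
  have hb0 : (0:ℝ) < β := by linarith
  have hb1 : (0:ℝ) < β - 1 := by linarith
  rw [Set.eq_empty_iff_forall_notMem]
  rintro x ⟨⟨hx0, hx1⟩, ε, ⟨hεle, hεx⟩, huniq⟩
  -- infrastructure
  have hfs : Summable (fun k => (ε k : ℝ) / β ^ (k+1)) := summable_digits hβ1 hεle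
  set t : ℕ → ℝ := fun n => ∑' k : ℕ, (ε (k+n) : ℝ) / β ^ ((k+n)+1) with ht
  have hts : ∀ n, Summable (fun k => (ε (k+n) : ℝ) / β ^ ((k+n)+1)) :=
    fun n => (summable_nat_add_iff (f := fun k => (ε k : ℝ)/β^(k+1)) n).2 hfs
  have hx_split : ∀ n, x = (∑ i ∈ Finset.range n, (ε i : ℝ)/β^(i+1)) + t n := by
    intro n
    rw [hεx, ← Summable.sum_add_tsum_nat_add n hfs]
  have ht_rec : ∀ n, t n = (ε n : ℝ)/β^(n+1) + t (n+1) := by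
    intro n
    have h := Summable.tsum_eq_zero_add (hts n)
    rw [ht]
    simp only []
    rw [h, zero_add]
    congr 1
    exact tsum_congr (fun k => by rw [show k+1+n = k+(n+1) from by omega])
  have ht_nonneg : ∀ n, 0 ≤ t n := fun n => tsum_nonneg (fun k => by positivity)
  have ht_le : ∀ n, t n ≤ β/(β-1) * (1/β)^(n+1) := by
    intro n
    rw [ht]
    calc ∑' k : ℕ, (ε (k+n) : ℝ) / β ^ ((k+n)+1)
        ≤ ∑' k : ℕ, (1/β)^(k+(n+1)) := by
          refine Summable.tsum_le_tsum (fun k => ?_) (hts n) ?_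
          · rw [div_pow, one_pow]
            have : ((ε (k+n) : ℝ)) ≤ 1 := by exact_mod_cast hεle (k+n)
            have he : k+(n+1) = (k+n)+1 := by omega
            rw [he]
            gcongr
          · have hlt : 1 / β < 1 := by rw [div_lt_one hb0]; exact hβ1
            have h := summable_geometric_of_lt_one (by positivity : (0:ℝ) ≤ 1/β) hlt
            exact (summable_nat_add_iff (n+1)).2 h
      _ = β/(β-1) * (1/β)^(n+1) := geom_tail hβ1 (n+1)
  -- Claim A: if digit is 0 then the tail is small
  have claimA : ∀ n, ε n = 0 → t (n+1) < 1/β^(n+1) := by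
    intro n hεn
    by_contra h
    push_neg at h
    have hp : (0:ℝ) < β^(n+1) := pow_pos hb0 _
    set y : ℝ := β^(n+1) * t (n+1) - 1 with hy
    have hy0 : 0 ≤ y := by
      have h2 := (div_le_iff₀ hp).1 h
      rw [hy]; nlinarith
    have hy1 : y ≤ 1/(β-1) := by
      have h2 := mul_le_mul_of_nonneg_left (ht_le (n+1)) hp.le
      have h3 : β^(n+1) * (β/(β-1) * (1/β)^((n+1)+1)) = 1/(β-1) := by
        rw [div_pow, one_pow]
        have : (β:ℝ)^((n+1)+1) = β^(n+1) * β := pow_succ β (n+1)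
        field_simp [this]
        ring
      rw [hy]; nlinarith
    obtain ⟨ε', hε'le, hε'n, hε'sum⟩ := exists_other hβ1 hβ2 ε hεle n 1 le_rfl hy0 hy1
    have hxε' : x = ∑' k : ℕ, (ε' k : ℝ) / β ^ (k+1) := by
      rw [hε'sum, hx_split (n+1), Finset.sum_range_succ, hεn]
      have hyv : y/β^(n+1) = t (n+1) - 1/β^(n+1) := by
        rw [hy]; field_simp
      rw [hyv]
      push_cast
      ring
    have := huniq ε' ⟨hε'le, hxε'⟩
    have h1 := congrFun this n
    rw [hε'n, hεn] at h1
    exact one_ne_zero h1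
  -- Claim B: if digit is 1 then the tail is large
  have claimB : ∀ n, ε n = 1 → (1/(β-1) - 1)/β^(n+1) < t (n+1) := by
    intro n hεn
    by_contra h
    push_neg at h
    have hp : (0:ℝ) < β^(n+1) := pow_pos hb0 _
    set y : ℝ := β^(n+1) * t (n+1) + 1 with hy
    have hy0 : 0 ≤ y := by
      have := ht_nonneg (n+1)
      rw [hy]; nlinarith
    have hy1 : y ≤ 1/(β-1) := by
      have h2 := (le_div_iff₀ hp).1 h
      rw [hy]; nlinarith
    obtain ⟨ε', hε'le, hε'n, hε'sum⟩ := exists_other hβ1 hβ2 ε hεle n 0 (by norm_num) hy0 hy1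
    have hxε' : x = ∑' k : ℕ, (ε' k : ℝ) / β ^ (k+1) := by
      rw [hε'sum, hx_split (n+1), Finset.sum_range_succ, hεn]
      have hyv : y/β^(n+1) = t (n+1) + 1/β^(n+1) := by
        rw [hy]; field_simp
      rw [hyv]
      push_cast
      ring
    have := huniq ε' ⟨hε'le, hxε'⟩
    have h1 := congrFun this n
    rw [hε'n, hεn] at h1
    exact zero_ne_one h1
  -- ε is not identically 0
  have hone : ∃ n, ε n = 1 := by
    by_contra h
    push_neg at h
    have hz : ∀ n, ε n = 0 := fun n => by have := hεle n; have := h n; omega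
    rw [hεx] at hx0
    simp [hz] at hx0
  -- ε is not identically 1
  have hzero : ∃ n, ε n = 0 := by
    by_contra h
    push_neg at h
    have hz : ∀ n, ε n = 1 := fun n => by have := hεle n; have := h n; omega
    have : x = 1/(β-1) := by
      rw [hεx]
      have : ∀ n : ℕ, (ε n : ℝ)/β^(n+1) = (1/β)^(n+1) := by
        intro n
        rw [hz n, div_pow, one_pow, Nat.cast_one]
      rw [tsum_congr this]
      have h := geom_tail hβ1 1
      have h2 : ∑' k : ℕ, ((1:ℝ)/β)^(k+1) = β/(β-1) * (1/β)^1 := h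
      rw [h2, pow_one]
      field_simp
    rw [this] at hx1
    exact lt_irrefl _ hx1
  -- there is a switch
  have hsw : ∃ n, ε n ≠ ε (n+1) := by
    by_contra h
    push_neg at h
    have hconst : ∀ n, ε n = ε 0 := by
      intro n
      induction n with
      | zero => rfl
      | succ n ih => rw [← h n, ih]
    obtain ⟨n1, h1⟩ := hone
    obtain ⟨n0, h0⟩ := hzero
    rw [hconst n1] at h1
    rw [hconst n0] at h0
    rw [h0] at h1
    exact zero_ne_one h1
  obtain ⟨n, hn⟩ := hsw
  have hc : (ε n = 0 ∧ ε (n+1) = 1) ∨ (ε n = 1 ∧ ε (n+1) = 0) := by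
    have := hεle n; have := hεle (n+1); omega
  have hp1 : (0:ℝ) < β^(n+1) := pow_pos hb0 _
  have hp2 : (0:ℝ) < β^(n+2) := pow_pos hb0 _
  have hpow : (β:ℝ)^(n+2) = β^(n+1) * β := pow_succ β (n+1)
  rcases hc with ⟨h0', h1'⟩ | ⟨h1', h0'⟩
  · -- ε n = 0, ε (n+1) = 1
    have hA := claimA n h0'
    have hB := claimB (n+1) h1'
    have hrec := ht_rec (n+1)
    rw [h1', Nat.cast_one, show (n+1)+1 = n+2 by omega] at hrec
    rw [show (n+1)+1 = n+2 by omega] at hB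
    have key : (1/(β-1))/β^(n+2) < 1/β^(n+1) := by
      have e1 : (1/(β-1))/β^(n+2) = (1/(β-1)-1)/β^(n+2) + 1/β^(n+2) := by ring
      rw [e1]
      linarith
    rw [div_lt_div_iff₀ hp2 hp1, hpow, one_mul] at key
    -- key : 1/(β-1) * β^(n+1) < β^(n+1)*β
    have key2 : 1/(β-1) < β := by
      by_contra hK
      push_neg at hK
      have h2 := mul_le_mul_of_nonneg_right hK hp1.le
      linarith [key, h2]
    rw [div_lt_iff₀ hb1] at key2
    linarith [hgold, key2]
  · -- ε n = 1, ε (n+1) = 0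
    have hB := claimB n h1'
    have hA := claimA (n+1) h0'
    have hrec := ht_rec (n+1)
    rw [h0', Nat.cast_zero, zero_div, zero_add] at hrec
    rw [show (n+1)+1 = n+2 by omega] at hA
    have key : (1/(β-1) - 1)/β^(n+1) < 1/β^(n+2) := by linarith
    rw [div_lt_div_iff₀ hp1 hp2, hpow, one_mul] at key
    -- key : (1/(β-1)-1) * (β^(n+1)*β) < β^(n+1)
    have key2 : (1/(β-1)-1)*β < 1 := by
      by_contra hK
      push_neg at hK
      have h2 := mul_le_mul_of_nonneg_right hK hp1.le
      linarith [key, h2]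
    have hc1 : (1/(β-1))*(β-1) = 1 := by field_simp
    have hcβ : 1/(β-1) < β := by linarith [key2, hc1]
    rw [div_lt_iff₀ hb1] at hcβ
    linarith [hgold, hcβ]
end

section
/- The map g from {a,b,c}^ℕ to the golden-mean shift X_G (all one-sided 0-1 sequences with no two consecutive 1's) defined by substituting a ↦ 00, b ↦ 010, c ↦ 10 and concatenating is a bijection. -/
/-- The words substituted for the letters `a`, `b`, `c` (as `Fin 3`). -/
def letterWord : Fin 3 → List ℕ
  | 0 => [0, 0]      -- a ↦ 00
  | 1 => [0, 1, 0]   -- b ↦ 010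
  | 2 => [1, 0]      -- c ↦ 10

/-- The concatenation map `g : {a,b,c}^ℕ → {0,1}^ℕ`, `g(j) = w(j₀) w(j₁) ⋯`.
Since each word has length ≥ 2, the first `n+1` words determine the `n`-th digit. -/
def concatMap (j : ℕ → Fin 3) (n : ℕ) : ℕ :=
  (((List.range (n + 1)).map (fun i => letterWord (j i))).flatten).getD n 0

/-- The golden-mean shift: one-sided 0-1 sequences with no two consecutive 1's. -/
def goldenMeanShift : Set (ℕ → ℕ) :=
  {ε : ℕ → ℕ | ∀ n, ε n ≤ 1 ∧ ¬(ε n = 1 ∧ ε (n + 1) = 1)}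

-- auxiliary defs
def prependW (w : List ℕ) (ε : ℕ → ℕ) : ℕ → ℕ :=
  fun n => if n < w.length then w.getD n 0 else ε (n - w.length)

def shiftSeq (ε : ℕ → ℕ) (m : ℕ) : ℕ → ℕ := fun n => ε (n + m)

lemma letterWord_len (i : Fin 3) : 2 ≤ (letterWord i).length := by
  fin_cases i <;> simp [letterWord]

lemma flatten_len (j : ℕ → Fin 3) (n : ℕ) :
    n < (((List.range (n + 1)).map (fun i => letterWord (j i))).flatten).length := by
  induction n with
  | zero => have := letterWord_len (j 0); simp [List.range_succ]; omega
  | succ n ih =>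
      have := letterWord_len (j (n+1))
      rw [List.range_succ (n := n+1)]
      simp only [List.map_append, List.flatten_append, List.length_append]
      have h2 : ((List.map (fun i => letterWord (j i)) [n+1]).flatten).length
          = (letterWord (j (n+1))).length := by simp
      omega

lemma concat_stable (j : ℕ → Fin 3) (k m : ℕ) (h : k + 1 ≤ m) :
    (((List.range m).map (fun i => letterWord (j i))).flatten).getD k 0 = concatMap j k := by
  obtain ⟨r, rfl⟩ : ∃ r, m = (k + 1) + r := ⟨m - (k+1), by omega⟩
  rw [List.range_add, List.map_append, List.flatten_append,
    List.getD_append _ _ _ _ (flatten_len j k)]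
  rfl

lemma concatMap_eq (j : ℕ → Fin 3) :
    concatMap j = prependW (letterWord (j 0)) (concatMap (fun n => j (n + 1))) := by
  funext n
  have hw := letterWord_len (j 0)
  have hsplit : concatMap j n =
      ((letterWord (j 0) ++ ((List.range n).map (fun i => letterWord (j (i + 1)))).flatten)).getD n 0 := by
    unfold concatMap
    rw [List.range_succ_eq_map]
    simp [Function.comp_def, Nat.succ_eq_add_one]
  rw [hsplit, prependW]
  by_cases hn : n < (letterWord (j 0)).length
  · rw [List.getD_append _ _ _ _ hn, if_pos hn]
  · rw [if_neg hn, List.getD_append_right _ _ _ _ (by omega)]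
    exact concat_stable _ _ _ (by omega)

lemma w_le1 (i : Fin 3) (k : ℕ) : (letterWord i).getD k 0 ≤ 1 := by
  fin_cases i <;> rcases k with _|_|_|k <;> simp [letterWord, List.getD]

lemma w_no11 (i : Fin 3) (k : ℕ) :
    ¬((letterWord i).getD k 0 = 1 ∧ (letterWord i).getD (k + 1) 0 = 1) := by
  fin_cases i <;> rcases k with _|_|_|k <;> simp [letterWord, List.getD]

lemma w_last (i : Fin 3) : (letterWord i).getD ((letterWord i).length - 1) 0 = 0 := by
  fin_cases i <;> simp [letterWord, List.getD]

lemma concatMap_mem : ∀ n (j : ℕ → Fin 3),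
    concatMap j n ≤ 1 ∧ ¬(concatMap j n = 1 ∧ concatMap j (n + 1) = 1) := by
  intro n
  induction n using Nat.strong_induction_on with
  | _ n ih =>
    intro j
    have hw := letterWord_len (j 0)
    rw [concatMap_eq j]
    set w := letterWord (j 0) with hwdef
    by_cases h1 : n + 1 < w.length
    · have hn : n < w.length := by omega
      simp only [prependW, if_pos hn, if_pos h1]
      exact ⟨w_le1 _ _, w_no11 _ _⟩
    · by_cases hn : n < w.length
      · have hn1 : n = w.length - 1 := by omega
        have hlast : w.getD n 0 = 0 := by rw [hn1, hwdef]; exact w_last (j 0)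
        constructor
        · simp only [prependW, if_pos hn, hlast]; omega
        · rintro ⟨ha, -⟩
          simp only [prependW, if_pos hn, hlast] at ha
          omega
      · simp only [prependW, if_neg hn, if_neg (by omega : ¬ n + 1 < w.length)]
        have h2 : n + 1 - w.length = (n - w.length) + 1 := by omega
        rw [h2]
        exact ih (n - w.length) (by omega) _

lemma mem_shift : ∀ {ε : ℕ → ℕ}, ε ∈ goldenMeanShift → ∀ m, shiftSeq ε m ∈ goldenMeanShift := by
  intro ε h m n
  have := h (n + m)
  constructor
  · exact this.1
  · simpa [shiftSeq, Nat.add_right_comm] using this.2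

def firstLetter (ε : ℕ → ℕ) : Fin 3 :=
  if ε 0 = 1 then 2 else if ε 1 = 1 then 1 else 0

def decode (ε : ℕ → ℕ) : ℕ → Fin 3
  | 0 => firstLetter ε
  | n+1 => decode (shiftSeq ε (letterWord (firstLetter ε)).length) n

lemma prepend_decode {ε : ℕ → ℕ} (h : ε ∈ goldenMeanShift) :
    prependW (letterWord (firstLetter ε)) (shiftSeq ε (letterWord (firstLetter ε)).length) = ε := by
  have h0 := h 0
  have h1 := h 1
  funext n
  have h2 := h 2
  by_cases e0 : ε 0 = 1
  · have e1 : ε 1 = 0 := by by_contra hne; have hb := h1.1; exact h0.2 ⟨e0, show ε 1 = 1 by omega⟩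
    simp only [firstLetter, if_pos e0]
    rcases n with _|_|n <;>
      simp [prependW, shiftSeq, letterWord, List.getD, e0, e1]
  · have e0' : ε 0 = 0 := by omega
    by_cases e1 : ε 1 = 1
    · have e2 : ε 2 = 0 := by by_contra hne; have hb := h2.1; exact h1.2 ⟨e1, show ε 2 = 1 by omega⟩
      simp only [firstLetter, if_neg e0, if_pos e1]
      rcases n with _|_|_|n <;>
        simp [prependW, shiftSeq, letterWord, List.getD, e0', e1, e2]
    · have e1' : ε 1 = 0 := by omega
      simp only [firstLetter, if_neg e0, if_neg e1]
      rcases n with _|_|n <;>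
        simp [prependW, shiftSeq, letterWord, List.getD, e0', e1']

lemma decode_spec : ∀ n (ε : ℕ → ℕ), ε ∈ goldenMeanShift → concatMap (decode ε) n = ε n := by
  intro n
  induction n using Nat.strong_induction_on with
  | _ n ih =>
    intro ε hε
    have hshift : (fun k => decode ε (k + 1)) = decode (shiftSeq ε (letterWord (firstLetter ε)).length) := rfl
    have hd0 : decode ε 0 = firstLetter ε := rfl
    rw [concatMap_eq, hd0, hshift]
    have hw := letterWord_len (firstLetter ε)
    by_cases hn : n < (letterWord (firstLetter ε)).length
    · conv_rhs => rw [← prepend_decode hε]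
      simp [prependW, if_pos hn]
    · simp only [prependW, if_neg hn]
      rw [ih _ (by omega) _ (mem_shift hε _)]
      simp only [shiftSeq]
      congr 1
      omega

lemma head_inj {j j' : ℕ → Fin 3} (h : concatMap j = concatMap j') : j 0 = j' 0 := by
  have h0 := congrFun h 0
  have h1 := congrFun h 1
  rw [concatMap_eq j, concatMap_eq j'] at h0 h1
  have hw := letterWord_len (j 0)
  have hw' := letterWord_len (j' 0)
  simp only [prependW] at h0 h1
  rw [if_pos (by omega), if_pos (by omega)] at h0
  rw [if_pos (by omega), if_pos (by omega)] at h1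
  exact (by decide : ∀ x y : Fin 3, (letterWord x).getD 0 0 = (letterWord y).getD 0 0 →
    (letterWord x).getD 1 0 = (letterWord y).getD 1 0 → x = y) _ _ h0 h1

lemma tail_inj {j j' : ℕ → Fin 3} (h : concatMap j = concatMap j') (h0 : j 0 = j' 0) :
    concatMap (fun n => j (n + 1)) = concatMap (fun n => j' (n + 1)) := by
  funext n
  have hw := letterWord_len (j 0)
  have := congrFun h (n + (letterWord (j 0)).length)
  rw [concatMap_eq j, concatMap_eq j'] at this
  rw [← h0] at this
  simpa [prependW, if_neg (by omega : ¬ n + (letterWord (j 0)).length < (letterWord (j 0)).length)]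
    using this

lemma concatMap_inj : ∀ n (j j' : ℕ → Fin 3), concatMap j = concatMap j' → j n = j' n := by
  intro n
  induction n with
  | zero => exact fun j j' h => head_inj h
  | succ n ihn =>
      intro j j' h
      exact ihn (fun k => j (k + 1)) (fun k => j' (k + 1)) (tail_inj h (head_inj h))


/-- the substitution map `a ↦ 00`, `b ↦ 010`, `c ↦ 10` followed by
concatenation is a bijection from `{a,b,c}^ℕ` onto the golden-mean shift `X_G`. -/
theorem concat_map_bijective :
    Set.BijOn concatMap Set.univ goldenMeanShift := by
  refine ⟨fun j _ n => concatMap_mem n j,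
    fun j _ j' _ h => funext fun n => concatMap_inj n j j' h,
    fun ε hε => ⟨decode ε, trivial, funext fun n => decode_spec n ε hε⟩⟩
end

section
/- Let G be the golden ratio and let B = B(a_1,...,a_r) be a block of the form 1(01)^{a_1}(00)^{a_2}⋯ or 1(00)^{a_1}(01)^{a_2}⋯ with natural number parameters a_1,...,a_r. Then the cardinality of the equivalence class of B under golden-ratio value-equivalence equals p_r + q_r, where p_r/q_r is the value of the finite continued fraction [a_1,...,a_r]. -/
/-- The value `Σ_{i=1}^n w_i G^{-i}` of a finite 0-1 word in base the golden ratio. -/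
noncomputable def goldenVal (w : List ℕ) : ℝ :=
  ∑ i ∈ Finset.range w.length, (w.getD i 0 : ℝ) / ((1 + Real.sqrt 5) / 2) ^ (i + 1)

/-- `c(w)`: the number of 0-1 words of the same length as `w` representing the same
value in base the golden ratio. -/
noncomputable def eqClassCard (w : List ℕ) : ℕ :=
  Set.ncard {w' : List ℕ | w'.length = w.length ∧ (∀ x ∈ w', x ≤ 1) ∧
    goldenVal w' = goldenVal w}

/-- The chunks `(01)^{a_1}(00)^{a_2}⋯` (if `t = true` the first chunk is of type `01`,
otherwise of type `00`; the types alternate). -/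
def blockChunks : Bool → List ℕ → List ℕ
  | _, [] => []
  | t, a :: rest =>
      (List.replicate a (if t then [0, 1] else [0, 0])).flatten ++ blockChunks (!t) rest

/-- The block `B(a_1,…,a_r) = 1(01)^{a_1}(00)^{a_2}⋯` or `1(00)^{a_1}(01)^{a_2}⋯`. -/
def blockWord (t : Bool) (as : List ℕ) : List ℕ := 1 :: blockChunks t as

/-- The continuant: `[a_1,…,a_r] = cont (tail) / cont (whole)` in lowest terms. -/
def cont : List ℕ → ℕ
  | [] => 1
  | [a] => a
  | a :: b :: rest => a * cont (b :: rest) + cont rest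

/-!
For a 0-1 word `s` and a real shift `δ`, count the 0-1 words of length `|s|` whose golden value
is `val s + δ`. Since `val (b :: s) = (b + val s) / φ`, these counts satisfy
`N_{b :: s}(δ) = N_s(b + φδ) + N_s(b + φδ - 1)`, and they vanish once `|δ| ≥ φ`; as `φ² = φ + 1`,
the shifts `0, ±1, ±ψ` are closed under this recursion. Along a block the negative shifts `-1` and
`ψ` have no representatives, and then prepending `01` or `00` acts on the counts at shifts `0` and
`1` by `[[1,1],[0,1]]` or `[[1,0],[1,1]]`. A run of `a` chunks therefore multiplies by
`[[1,a],[0,1]]` or `[[1,0],[a,1]]`, which is the continuant recursion, and the leading `1` adds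
the two counts.
-/

open Real
open scoped goldenRatio

lemma goldenVal_eq_sum (w : List ℕ) :
    goldenVal w = ∑ i ∈ Finset.range w.length, (w.getD i 0 : ℝ) / φ ^ (i + 1) := rfl

lemma goldenVal_nil : goldenVal [] = 0 := by simp [goldenVal]

lemma goldenVal_cons (b : ℕ) (w : List ℕ) : goldenVal (b :: w) = (b + goldenVal w) / φ := by
  rw [goldenVal_eq_sum, goldenVal_eq_sum, List.length_cons, Finset.sum_range_succ', add_comm,
    add_div, Finset.sum_div]
  simp [pow_succ, div_div]

lemma goldenVal_nonneg (w : List ℕ) : 0 ≤ goldenVal w :=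
  Finset.sum_nonneg fun _ _ => by positivity

lemma goldenVal_lt_goldenRatio {w : List ℕ} (hw : ∀ x ∈ w, x ≤ 1) : goldenVal w < φ := by
  induction w with
  | nil => simpa [goldenVal_nil] using goldenRatio_pos
  | cons b w ih =>
    simp only [List.mem_cons, forall_eq_or_imp] at hw
    have hb : (b : ℝ) ≤ 1 := by exact_mod_cast hw.1
    rw [goldenVal_cons, div_lt_iff₀ goldenRatio_pos, ← sq, goldenRatio_sq]
    linarith [ih hw.2]

def binaryReps (m : ℕ) (x : ℝ) : Set (List ℕ) :=
  {w | w.length = m ∧ (∀ a ∈ w, a ≤ 1) ∧ goldenVal w = x}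

lemma binaryReps_finite (m : ℕ) (x : ℝ) : (binaryReps m x).Finite := by
  refine ((List.finite_length_eq (Fin 2) m).image (List.map Fin.val)).subset ?_
  rintro w ⟨hlen, hbin, -⟩
  refine ⟨w.pmap (fun a ha => ⟨a, Nat.lt_succ_of_le ha⟩) hbin, by simpa using hlen, ?_⟩
  simp [List.map_pmap]

lemma binaryReps_succ (m : ℕ) (x : ℝ) :
    binaryReps (m + 1) x =
      List.cons 0 '' binaryReps m (φ * x) ∪ List.cons 1 '' binaryReps m (φ * x - 1) := by
  ext (_ | ⟨b, w⟩)
  · simp [binaryReps]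
  · have hval : goldenVal (b :: w) = x ↔ goldenVal w = φ * x - b := by
      rw [goldenVal_cons, div_eq_iff goldenRatio_ne_zero]; constructor <;> intro h <;> linarith
    rcases b with _ | _ | b <;> simp [binaryReps, hval]

noncomputable def numReps (m : ℕ) (x : ℝ) : ℕ := (binaryReps m x).ncard

lemma numReps_succ (m : ℕ) (x : ℝ) :
    numReps (m + 1) x = numReps m (φ * x) + numReps m (φ * x - 1) := by
  have hdisj : Disjoint (List.cons 0 '' binaryReps m (φ * x))
      (List.cons 1 '' binaryReps m (φ * x - 1)) :=
    Set.disjoint_left.mpr (by rintro _ ⟨_, -, rfl⟩ ⟨_, -, h⟩; simp at h)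
  rw [numReps, binaryReps_succ, Set.ncard_union_eq hdisj ((binaryReps_finite _ _).image _)
      ((binaryReps_finite _ _).image _),
    Set.ncard_image_of_injective _ List.cons_injective,
    Set.ncard_image_of_injective _ List.cons_injective, numReps, numReps]

lemma numReps_eq_zero {m : ℕ} {x : ℝ} (hx : x < 0 ∨ φ ≤ x) : numReps m x = 0 := by
  rw [numReps, Set.ncard_eq_zero (binaryReps_finite _ _)]
  refine Set.eq_empty_of_forall_notMem ?_
  rintro w ⟨-, hw, rfl⟩
  have := goldenVal_nonneg w
  have := goldenVal_lt_goldenRatio hw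
  rcases hx with hx | hx <;> linarith

lemma numReps_zero (x : ℝ) : numReps 0 x = if x = 0 then 1 else 0 := by
  split_ifs with hx
  · rw [numReps, Set.ncard_eq_one]
    refine ⟨[], Set.eq_singleton_iff_unique_mem.mpr ⟨by simp [binaryReps, goldenVal_nil, hx], ?_⟩⟩
    exact fun w hw => List.length_eq_zero_iff.mp hw.1
  · rw [numReps, Set.ncard_eq_zero (binaryReps_finite _ _)]
    refine Set.eq_empty_of_forall_notMem ?_
    rintro w ⟨hw, -, rfl⟩
    rw [List.length_eq_zero_iff.mp hw, goldenVal_nil] at hx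
    exact hx rfl

noncomputable def shiftCount (s : List ℕ) (δ : ℝ) : ℕ := numReps s.length (goldenVal s + δ)

lemma eqClassCard_eq_shiftCount (w : List ℕ) : eqClassCard w = shiftCount w 0 := by
  rw [shiftCount, add_zero]; rfl

lemma shiftCount_nil (δ : ℝ) : shiftCount [] δ = if δ = 0 then 1 else 0 := by
  rw [shiftCount, List.length_nil, goldenVal_nil, zero_add, numReps_zero]

lemma shiftCount_cons {b : ℕ} {δ x : ℝ} (s : List ℕ) (hx : b + φ * δ = x) :
    shiftCount (b :: s) δ = shiftCount s x + shiftCount s (x - 1) := by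
  rw [shiftCount, List.length_cons, numReps_succ, goldenVal_cons, mul_add,
    mul_div_cancel₀ _ goldenRatio_ne_zero, shiftCount, shiftCount, ← hx]
  ring_nf

lemma shiftCount_eq_zero {s : List ℕ} (hs : ∀ x ∈ s, x ≤ 1) {δ : ℝ} (hδ : δ ≤ -φ ∨ φ ≤ δ) :
    shiftCount s δ = 0 := by
  have := goldenVal_nonneg s
  have := goldenVal_lt_goldenRatio hs
  refine numReps_eq_zero ?_
  rcases hδ with hδ | hδ
  · left; linarith
  · right; linarith

section OneLetter

variable {s : List ℕ}

lemma shiftCount_zero_cons_zero : shiftCount (0 :: s) 0 = shiftCount s 0 + shiftCount s (-1) := by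
  rw [shiftCount_cons s (x := 0) (by simp), zero_sub]

lemma shiftCount_one_cons_zero : shiftCount (1 :: s) 0 = shiftCount s 1 + shiftCount s 0 := by
  rw [shiftCount_cons s (x := 1) (by simp), sub_self]

lemma shiftCount_zero_cons_neg_one (hs : ∀ x ∈ s, x ≤ 1) : shiftCount (0 :: s) (-1) = 0 := by
  rw [shiftCount_cons s (x := -φ) (by simp), shiftCount_eq_zero hs (by left; rfl),
    shiftCount_eq_zero hs (by left; linarith)]

lemma shiftCount_one_cons_neg_one (hs : ∀ x ∈ s, x ≤ 1) :
    shiftCount (1 :: s) (-1) = shiftCount s ψ := by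
  rw [shiftCount_cons s (x := ψ) (by simp [← one_sub_goldenConj, sub_eq_add_neg]),
    shiftCount_eq_zero hs (δ := ψ - 1) (by left; rw [← one_sub_goldenConj]; linarith), add_zero]

lemma shiftCount_zero_cons_goldenConj (hs : ∀ x ∈ s, x ≤ 1) :
    shiftCount (0 :: s) ψ = shiftCount s (-1) := by
  rw [shiftCount_cons s (x := -1) (by rw [← one_sub_goldenConj]; linear_combination -goldenRatio_sq),
    shiftCount_eq_zero hs (δ := -1 - 1) (by left; linarith [goldenRatio_lt_two]), add_zero]

lemma shiftCount_zero_cons_one (hs : ∀ x ∈ s, x ≤ 1) :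
    shiftCount (0 :: s) 1 = shiftCount s (-ψ) := by
  rw [shiftCount_cons s (x := φ) (by simp), shiftCount_eq_zero hs (by right; rfl), zero_add,
    ← one_sub_goldenConj, neg_sub]

lemma shiftCount_zero_cons_neg_goldenConj :
    shiftCount (0 :: s) (-ψ) = shiftCount s 1 + shiftCount s 0 := by
  rw [shiftCount_cons s (x := 1) (by rw [← one_sub_goldenConj]; linear_combination goldenRatio_sq),
    sub_self]

lemma shiftCount_one_cons_neg_goldenConj (hs : ∀ x ∈ s, x ≤ 1) :
    shiftCount (1 :: s) (-ψ) = shiftCount s 1 := by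
  rw [shiftCount_cons s (x := 2) (by rw [← one_sub_goldenConj]; linear_combination goldenRatio_sq),
    shiftCount_eq_zero hs (δ := 2) (by right; linarith [goldenRatio_lt_two]), zero_add]
  norm_num

end OneLetter

structure BlockInvariant (s : List ℕ) : Prop where
  binary : ∀ x ∈ s, x ≤ 1
  shiftCount_neg_one : shiftCount s (-1) = 0
  shiftCount_goldenConj : shiftCount s ψ = 0

namespace BlockInvariant

variable {s : List ℕ}

lemma zero_cons (hs : ∀ x ∈ s, x ≤ 1) (h : shiftCount s (-1) = 0) : BlockInvariant (0 :: s) where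
  binary := by simpa using hs
  shiftCount_neg_one := shiftCount_zero_cons_neg_one hs
  shiftCount_goldenConj := by rw [shiftCount_zero_cons_goldenConj hs, h]

lemma zero_one_cons (h : BlockInvariant s) : BlockInvariant (0 :: 1 :: s) :=
  zero_cons (by simpa using h.binary) (by rw [shiftCount_one_cons_neg_one h.binary, h.shiftCount_goldenConj])

lemma zero_zero_cons (h : BlockInvariant s) : BlockInvariant (0 :: 0 :: s) :=
  zero_cons (by simpa using h.binary) (shiftCount_zero_cons_neg_one h.binary)

lemma shiftCount_zero_one_cons_zero (h : BlockInvariant s) :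
    shiftCount (0 :: 1 :: s) 0 = shiftCount s 0 + shiftCount s 1 := by
  rw [shiftCount_zero_cons_zero, shiftCount_one_cons_zero, shiftCount_one_cons_neg_one h.binary,
    h.shiftCount_goldenConj, add_zero, add_comm]

lemma shiftCount_zero_one_cons_one (h : BlockInvariant s) :
    shiftCount (0 :: 1 :: s) 1 = shiftCount s 1 := by
  rw [shiftCount_zero_cons_one (by simpa using h.binary),
    shiftCount_one_cons_neg_goldenConj h.binary]

lemma shiftCount_zero_zero_cons_zero (h : BlockInvariant s) :
    shiftCount (0 :: 0 :: s) 0 = shiftCount s 0 := by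
  rw [shiftCount_zero_cons_zero, shiftCount_zero_cons_zero, shiftCount_zero_cons_neg_one h.binary,
    h.shiftCount_neg_one, add_zero, add_zero]

lemma shiftCount_zero_zero_cons_one (h : BlockInvariant s) :
    shiftCount (0 :: 0 :: s) 1 = shiftCount s 1 + shiftCount s 0 := by
  rw [shiftCount_zero_cons_one (by simpa using h.binary), shiftCount_zero_cons_neg_goldenConj]

lemma replicate_zero_one_append (h : BlockInvariant s) (a : ℕ) :
    let w := (List.replicate a [0, 1]).flatten ++ s
    BlockInvariant w ∧ shiftCount w 0 = shiftCount s 0 + a * shiftCount s 1 ∧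
      shiftCount w 1 = shiftCount s 1 := by
  induction a with
  | zero => simpa using h
  | succ a ih =>
    obtain ⟨hw, hw0, hw1⟩ := ih
    simp only [List.replicate_succ, List.flatten_cons, List.cons_append,
      List.nil_append]
    refine ⟨hw.zero_one_cons, ?_, ?_⟩
    · rw [hw.shiftCount_zero_one_cons_zero, hw0, hw1]; ring
    · rw [hw.shiftCount_zero_one_cons_one, hw1]

lemma replicate_zero_zero_append (h : BlockInvariant s) (a : ℕ) :
    let w := (List.replicate a [0, 0]).flatten ++ s
    BlockInvariant w ∧ shiftCount w 0 = shiftCount s 0 ∧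
      shiftCount w 1 = shiftCount s 1 + a * shiftCount s 0 := by
  induction a with
  | zero => simpa using h
  | succ a ih =>
    obtain ⟨hw, hw0, hw1⟩ := ih
    simp only [List.replicate_succ, List.flatten_cons, List.cons_append,
      List.nil_append]
    refine ⟨hw.zero_zero_cons, ?_, ?_⟩
    · rw [hw.shiftCount_zero_zero_cons_zero, hw0]
    · rw [hw.shiftCount_zero_zero_cons_one, hw0, hw1]; ring

end BlockInvariant

/-- The numerator `p_r` of `[a_1,…,a_r]`; unlike `cont as.tail`, it is `0` at `[]`. -/
def tailCont : List ℕ → ℕ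
  | [] => 0
  | _ :: as => cont as

lemma cont_cons (a : ℕ) (as : List ℕ) : cont (a :: as) = a * cont as + tailCont as := by
  cases as <;> simp [cont, tailCont]

lemma blockChunks_invariant_and_counts (t : Bool) (as : List ℕ)
    (hpar : if t then Even as.length else Odd as.length) :
    BlockInvariant (blockChunks t as) ∧
      shiftCount (blockChunks t as) 0 = (if t then cont as else tailCont as) ∧
      shiftCount (blockChunks t as) 1 = (if t then tailCont as else cont as) := by
  induction as generalizing t with
  | nil =>
    cases t
    · simp at hpar
    · refine ⟨⟨by simp [blockChunks], ?_, ?_⟩, ?_, ?_⟩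
      · simp [blockChunks, shiftCount_nil]
      · rw [blockChunks, shiftCount_nil, if_neg goldenConj_ne_zero]
      all_goals simp [blockChunks, shiftCount_nil, cont, tailCont]
  | cons a rest ih =>
    cases t
    · obtain ⟨hr, hr0, hr1⟩ := ih true (by simpa [Nat.odd_add_one] using hpar)
      obtain ⟨hw, hw0, hw1⟩ := hr.replicate_zero_zero_append a
      refine ⟨hw, ?_, ?_⟩
      · simp [blockChunks, hw0, hr0, tailCont]
      · simp [blockChunks, hw1, hr0, hr1, cont_cons]; ring
    · obtain ⟨hr, hr0, hr1⟩ := ih false (by simpa [Nat.even_add_one] using hpar)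
      obtain ⟨hw, hw0, hw1⟩ := hr.replicate_zero_one_append a
      refine ⟨hw, ?_, ?_⟩
      · simp [blockChunks, hw0, hr0, hr1, cont_cons]; ring
      · simp [blockChunks, hw1, hr1, tailCont]

theorem block_eqClassCard_eq_continuant_general (t : Bool) (as : List ℕ)
    (hne : as ≠ [])
    (hpar : if t then Even as.length else Odd as.length) :
    eqClassCard (blockWord t as) = cont as.tail + cont as := by
  obtain ⟨a, as, rfl⟩ := List.exists_cons_of_ne_nil hne
  obtain ⟨-, h0, h1⟩ := blockChunks_invariant_and_counts t (a :: as) hpar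
  rw [eqClassCard_eq_shiftCount, blockWord, shiftCount_one_cons_zero, h0, h1]
  cases t <;> simp [tailCont, add_comm]

/-- the equivalence class of the block `B(a_1,…,a_r)` has cardinality
`p_r + q_r`, where `p_r/q_r = [a_1,…,a_r]` is the finite continued fraction. (The parity
hypothesis says the last chunk is of type `00`, so that the word is indeed a block.) -/
theorem block_eqClassCard_eq_continuant (t : Bool) (as : List ℕ)
    (hne : as ≠ []) (hpos : ∀ a ∈ as, 1 ≤ a)
    (hpar : if t then Even as.length else Odd as.length) :
    eqClassCard (blockWord t as) = cont as.tail + cont as :=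
  block_eqClassCard_eq_continuant_general t as hne hpar
end

section
/- Let α ∈ (0,1) be irrational with partial quotients (a_n) and α_n = ||q_n α||. If a sequence (x_n) in the Ostrowski Markov compactum X'_α gives the unique representation of x = Σ x_n α_n among ALL sequences with 0 ≤ x_n ≤ a_n (not just admissible ones), then: (1) x_n = 0 for some n implies x_j = 0 for all j ≤ n, and (2) x_n = a_n is impossible for every n. -/
private lemma tsum_add_zero_support (g h : ℕ → ℝ) (hs : Summable h) (hz : ∑' k, h k = 0) :
    ∑' k, (g k + h k) = ∑' k, g k := by
  by_cases hg : Summable g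
  · rw [Summable.tsum_add hg hs, hz, add_zero]
  · rw [tsum_eq_zero_of_not_summable hg, tsum_eq_zero_of_not_summable]
    intro hgh
    exact hg (by simpa using hgh.sub hs)

/-- in the Ostrowski setting, if an admissible sequence `(x_n)` gives the
unique representation of its value among ALL digit sequences with `0 ≤ y_n ≤ a_n`, then
(1) a zero digit forces all earlier digits to be zero, and (2) no digit equals `a_n`. -/
theorem unique_ostrowski_structure
    (α : ℝ) (hα : α ∈ Set.Ioo (0 : ℝ) 1) (hirr : Irrational α)
    (a : ℕ → ℕ) (ha : ∀ n, 1 ≤ a n)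
    (D : ℕ → ℝ) (hD0 : D 0 = 1) (hD1 : D 1 = α) (hpos : ∀ n, 0 < D n)
    (hrec : ∀ n, D n = a n * D (n + 1) + D (n + 2))
    (xs : ℕ → ℕ)
    (hbd : ∀ n, xs n ≤ a n)
    (hmarkov : ∀ n, xs n = a n → xs (n + 1) = 0)
    (htail : ¬ ∃ N, ∀ k, xs (N + 2 * k) = a (N + 2 * k) ∧ xs (N + 2 * k + 1) = 0)
    (huniq : ∀ ys : ℕ → ℕ, (∀ n, ys n ≤ a n) →
      (∑' n : ℕ, (ys n : ℝ) * D (n + 1)) = (∑' n : ℕ, (xs n : ℝ) * D (n + 1)) → ys = xs) :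
    (∀ n, xs n = 0 → ∀ j ≤ n, xs j = 0) ∧ (∀ n, xs n ≠ a n) := by
  -- Key lemma: cannot have xs n ≥ 1, xs (n+1) = 0, xs (n+2) < a (n+2)
  have key : ∀ n, 1 ≤ xs n → xs (n + 1) = 0 → xs (n + 2) < a (n + 2) → False := by
    intro n h1 h2 h3
    set ys : ℕ → ℕ := fun k =>
      if k = n then xs n - 1 else if k = n + 1 then a (n + 1)
      else if k = n + 2 then xs (n + 2) + 1 else xs k with hys
    have hysbd : ∀ k, ys k ≤ a k := by
      intro k
      simp only [hys]
      split_ifs with e1 e2 e3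
      · subst e1; exact le_trans (Nat.sub_le _ _) (hbd _)
      · subst e2; exact le_rfl
      · subst e3; exact h3
      · exact hbd k
    -- the correction function
    set h : ℕ → ℝ := (fun k => if k = n then (-D (n + 1)) else 0) +
        ((fun k => if k = n + 1 then (a (n + 1) : ℝ) * D (n + 2) else 0) +
         (fun k => if k = n + 2 then D (n + 3) else 0)) with hh
    have hsum1 := hasSum_ite_eq n (-D (n + 1))
    have hsum2 := hasSum_ite_eq (n + 1) ((a (n + 1) : ℝ) * D (n + 2))
    have hsum3 := hasSum_ite_eq (n + 2) (D (n + 3))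
    have hH : HasSum h (-D (n + 1) + ((a (n + 1) : ℝ) * D (n + 2) + D (n + 3))) :=
      hsum1.add (hsum2.add hsum3)
    have hval : -D (n + 1) + ((a (n + 1) : ℝ) * D (n + 2) + D (n + 3)) = 0 := by
      have := hrec (n + 1)
      linarith
    rw [hval] at hH
    have hpt : ∀ k, (ys k : ℝ) * D (k + 1) = (xs k : ℝ) * D (k + 1) + h k := by
      intro k
      simp only [hys, hh, Pi.add_apply]
      rcases eq_or_ne k n with e1 | e1
      · subst e1
        have : k ≠ k + 1 := by omega
        rw [if_pos rfl, if_pos rfl, if_neg (by omega), if_neg (by omega)]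
        rw [Nat.cast_sub h1]
        push_cast
        ring
      rcases eq_or_ne k (n + 1) with e2 | e2
      · subst e2
        rw [if_neg e1, if_pos rfl, if_neg e1, if_pos rfl, if_neg (by omega), h2]
        push_cast
        ring
      rcases eq_or_ne k (n + 2) with e3 | e3
      · subst e3
        rw [if_neg e1, if_neg e2, if_pos rfl, if_neg e1, if_neg e2, if_pos rfl]
        push_cast
        ring
      · rw [if_neg e1, if_neg e2, if_neg e3, if_neg e1, if_neg e2, if_neg e3]
        ring
    have hsums : (∑' k : ℕ, (ys k : ℝ) * D (k + 1)) = ∑' k : ℕ, (xs k : ℝ) * D (k + 1) := by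
      calc (∑' k : ℕ, (ys k : ℝ) * D (k + 1))
          = ∑' k : ℕ, ((xs k : ℝ) * D (k + 1) + h k) := by
            exact tsum_congr hpt
        _ = ∑' k : ℕ, (xs k : ℝ) * D (k + 1) :=
            tsum_add_zero_support _ _ hH.summable hH.tsum_eq
    have heq := huniq ys hysbd hsums
    have h4 : ys (n + 1) = xs (n + 1) := by rw [heq]
    have h5 : ys (n + 1) = a (n + 1) := by simp [hys]
    have := ha (n + 1)
    omega
  -- Part 2: no digit equals a n
  have part2 : ∀ n, xs n ≠ a n := by
    intro n hn
    apply htail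
    refine ⟨n, fun k => ?_⟩
    induction k with
    | zero => simpa using ⟨hn, hmarkov n hn⟩
    | succ k ih =>
      obtain ⟨ihe, iho⟩ := ih
      have h1 : 1 ≤ xs (n + 2 * k) := le_trans (ha _) (le_of_eq ihe.symm)
      have h3 : xs (n + 2 * k + 2) = a (n + 2 * k + 2) := by
        by_contra hne
        exact key (n + 2 * k) h1 iho (lt_of_le_of_ne (hbd _) hne)
      have h3' : xs (n + 2 * (k + 1)) = a (n + 2 * (k + 1)) := by
        have : n + 2 * (k + 1) = n + 2 * k + 2 := by ring
        rw [this]; exact h3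
      exact ⟨h3', by have := hmarkov _ h3'; simpa using this⟩
  refine ⟨?_, part2⟩
  -- Part 1: a zero digit forces earlier digits to be zero
  have step : ∀ n, xs (n + 1) = 0 → xs n = 0 := by
    intro n hn1
    by_contra hn
    exact key n (Nat.one_le_iff_ne_zero.mpr hn) hn1
      (lt_of_le_of_ne (hbd _) (part2 (n + 2)))
  intro n hn j hj
  obtain ⟨d, rfl⟩ := Nat.exists_eq_add_of_le hj
  clear hj
  have gen : ∀ d, xs (j + d) = 0 → xs j = 0 := by
    intro d
    induction d with
    | zero => intro h; simpa using h
    | succ d ih =>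
      intro h
      exact ih (step (j + d) h)
  exact gen d hn
end
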